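/- arXiv:2509.18969 — 6 statements merged into one kernel-verified Lean document; each statement's English description precedes it below -/
import Mathlib

section
/- For all real x > 2, the inequality x·(x²−3)/(x²−2) < x/2 + √(x²−4)/2 < x·(x²−2)/(x²−1) holds. -/
/-- For all real `x > 2`:
`x(x²−3)/(x²−2) < x/2 + √(x²−4)/2 < x(x²−2)/(x²−1)`. -/
theorem stmt_1 (x : ℝ) (hx : 2 < x) :
    x * (x ^ 2 - 3) / (x ^ 2 - 2) < x / 2 + Real.sqrt (x ^ 2 - 4) / 2 ∧
      x / 2 + Real.sqrt (x ^ 2 - 4) / 2 < x * (x ^ 2 - 2) / (x ^ 2 - 1) := by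
  have hx0 : (0:ℝ) < x := by linarith
  have h4 : (0:ℝ) ≤ x ^ 2 - 4 := by nlinarith
  set s := Real.sqrt (x ^ 2 - 4) with hs
  have hs0 : 0 ≤ s := Real.sqrt_nonneg _
  have hs2 : s ^ 2 = x ^ 2 - 4 := Real.sq_sqrt h4
  have h2 : (0:ℝ) < x ^ 2 - 2 := by nlinarith
  have h1 : (0:ℝ) < x ^ 2 - 1 := by nlinarith
  have key1 : x * s < x ^ 2 - 2 := by nlinarith [mul_nonneg hx0.le hs0]
  have key2 : s * (x ^ 2 - 1) < x * (x ^ 2 - 3) := by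
    nlinarith [mul_nonneg hs0 h1.le, sq_nonneg (s * (x ^ 2 - 1) - x * (x ^ 2 - 3))]
  constructor
  · rw [div_lt_iff₀ h2]; nlinarith
  · rw [lt_div_iff₀ h1]; nlinarith
end

section
/- Let α = 11 + √120 (so α + α⁻¹ = 22, with α·α⁻¹ = 1). Then for every positive integer m, 22^m·((481/482)^m + (1/483)^m) < α^m + α^(−m) < 22^m·((482/483)^m + (1/482)^m). -/
/-! Since `α + α⁻¹ = 22`, both inequalities follow termwise from the single estimate
`22/483 < α⁻¹ < 22/482`, i.e. `2640/241 < √120 < 5291/483`: it gives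
`22 · 481/482 < α < 22 · 482/483`, and strict monotonicity of `x ↦ x ^ m` on `[0, ∞)` finishes. -/

theorem add_pow_lt_add_pow {R : Type*} [Semiring R] [LinearOrder R] [IsStrictOrderedRing R]
    {a b c d : R} (ha : 0 ≤ a) (hb : 0 ≤ b) (hac : a < c) (hbd : b < d) {m : ℕ} (hm : m ≠ 0) :
    a ^ m + b ^ m < c ^ m + d ^ m :=
  add_lt_add (pow_lt_pow_left₀ hac ha hm) (pow_lt_pow_left₀ hbd hb hm)

theorem inv_eleven_add_sqrt_120 : (11 + √120)⁻¹ = 11 - √120 := by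
  refine inv_eq_of_mul_eq_one_right ?_
  have hsq : √120 ^ 2 = 120 := Real.sq_sqrt (by norm_num)
  linear_combination -hsq

theorem eleven_sub_sqrt_120_mem_Ioo : 11 - √120 ∈ Set.Ioo (22 / 483 : ℝ) (22 / 482) := by
  have hlo : (2640 / 241 : ℝ) < √120 := (Real.lt_sqrt (by norm_num)).2 (by norm_num)
  have hhi : √120 < 5291 / 483 := (Real.sqrt_lt' (by norm_num)).2 (by norm_num)
  constructor <;> linarith

/-- With `α = 11 + √120`, for every positive integer `m`,
`22^m((481/482)^m + (1/483)^m) < α^m + α^{-m} < 22^m((482/483)^m + (1/482)^m)`. -/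
theorem stmt_2 (α : ℝ) (hα : α = 11 + Real.sqrt 120) (m : ℕ) (hm : 0 < m) :
    (22 : ℝ) ^ m * ((481 / 482 : ℝ) ^ m + (1 / 483 : ℝ) ^ m) < α ^ m + α⁻¹ ^ m ∧
      α ^ m + α⁻¹ ^ m < (22 : ℝ) ^ m * ((482 / 483 : ℝ) ^ m + (1 / 482 : ℝ) ^ m) := by
  obtain ⟨hβlo, hβhi⟩ := eleven_sub_sqrt_120_mem_Ioo
  have hinv : α⁻¹ = 11 - √120 := hα ▸ inv_eleven_add_sqrt_120
  have hα' : α = 22 - (11 - √120) := by rw [hα]; ring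
  simp only [mul_add, ← mul_pow, hinv]
  constructor
  · exact add_pow_lt_add_pow (by norm_num) (by norm_num) (by rw [hα']; linarith) (by linarith)
      hm.ne'
  · exact add_pow_lt_add_pow (by rw [hα']; linarith) (by linarith) (by rw [hα']; linarith)
      (by linarith) hm.ne'
end

section
/- Define A(x) = (1/x)·22^x·((481/482)^x + (1/483)^x) − 22^(x/2) and B(x) = (1/x)·6^x + (1/x)·22^(x/2) + 6^(x/3) + 22^(x/6). Then for all real x ≥ 16, A(x) > 244823040·B(x). -/
/-- Base-change helper: if `a ^ n = b` then `b ^ y = a ^ (n * y)` for rpow. -/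
lemma rpow_base_change (a b : ℝ) (n : ℕ) (ha : 0 ≤ a) (h : a ^ n = b) (y : ℝ) :
    b ^ y = a ^ ((n : ℝ) * y) := by
  rw [← h, ← Real.rpow_natCast a n, ← Real.rpow_mul ha]

/-- With `A(x) = (1/x)·22^x·((481/482)^x + (1/483)^x) − 22^(x/2)` and
`B(x) = (1/x)·6^x + (1/x)·22^(x/2) + 6^(x/3) + 22^(x/6)`,
we have `A(x) > 244823040·B(x)` for all real `x ≥ 16`. -/
theorem stmt_4 (x : ℝ) (hx : 16 ≤ x) :
    (1 / x) * (22 : ℝ) ^ x * ((481 / 482 : ℝ) ^ x + (1 / 483 : ℝ) ^ x) - (22 : ℝ) ^ (x / 2) >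
      244823040 *
        ((1 / x) * (6 : ℝ) ^ x + (1 / x) * (22 : ℝ) ^ (x / 2) +
          (6 : ℝ) ^ (x / 3) + (22 : ℝ) ^ (x / 6)) := by
  have hx0 : (0:ℝ) < x := by linarith
  -- log 22 ≥ 3
  have hexp3 : Real.exp 3 < 22 := by
    have h1 := Real.exp_one_lt_d9
    have h3 : Real.exp 3 = (Real.exp 1)^3 := by
      rw [← Real.exp_nat_mul]; norm_num
    rw [h3]
    calc (Real.exp 1)^3 ≤ (2.7182818286:ℝ)^3 :=
        pow_le_pow_left₀ (Real.exp_pos 1).le h1.le 3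
      _ < 22 := by norm_num
  have hlog22 : (3:ℝ) ≤ Real.log 22 :=
    (Real.le_log_iff_exp_le (by norm_num)).2 hexp3.le
  -- x ≤ 22^(x/6)
  have hx22 : x ≤ (22:ℝ) ^ (x/6) := by
    have h1 : Real.exp (x/2) ≤ (22:ℝ) ^ (x/6) := by
      rw [Real.rpow_def_of_pos (by norm_num : (0:ℝ) < 22)]
      apply Real.exp_le_exp.2
      nlinarith
    have h2 : x ≤ Real.exp (x/2) := by
      have hb := Real.add_one_le_exp (x/4)
      have hsq : Real.exp (x/2) = Real.exp (x/4) * Real.exp (x/4) := by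
        rw [← Real.exp_add]; ring_nf
      nlinarith [Real.exp_pos (x/4)]
    linarith
  -- 22^(x/6) ≤ 6^(x/3)
  have h22_6 : (22:ℝ) ^ (x/6) ≤ (6:ℝ) ^ (x/3) := by
    have : (36:ℝ) ^ (x/6) = (6:ℝ) ^ ((2:ℕ) * (x/6)) :=
      rpow_base_change 6 36 2 (by norm_num) (by norm_num) (x/6)
    have h36 : (22:ℝ) ^ (x/6) ≤ (36:ℝ) ^ (x/6) :=
      Real.rpow_le_rpow (by norm_num) (by norm_num) (by positivity)
    rw [this] at h36
    calc (22:ℝ) ^ (x/6) ≤ (6:ℝ) ^ ((2:ℕ) * (x/6)) := h36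
      _ = (6:ℝ) ^ (x/3) := by rw [show ((2:ℕ):ℝ)*(x/6) = x/3 by push_cast; ring]
  have hx6 : x ≤ (6:ℝ) ^ (x/3) := hx22.trans h22_6
  -- b1 : 22^(x/2) ≤ 6^x
  have b1 : (22:ℝ) ^ (x/2) ≤ (6:ℝ) ^ x := by
    have h36 : (22:ℝ) ^ (x/2) ≤ (36:ℝ) ^ (x/2) :=
      Real.rpow_le_rpow (by norm_num) (by norm_num) (by positivity)
    have : (36:ℝ) ^ (x/2) = (6:ℝ) ^ ((2:ℕ) * (x/2)) :=
      rpow_base_change 6 36 2 (by norm_num) (by norm_num) (x/2)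
    rw [this] at h36
    calc (22:ℝ) ^ (x/2) ≤ (6:ℝ) ^ ((2:ℕ) * (x/2)) := h36
      _ = (6:ℝ) ^ x := by rw [show ((2:ℕ):ℝ)*(x/2) = x by push_cast; ring]
  -- b2 : x * 6^(x/3) ≤ 6^x
  have b2 : x * (6:ℝ) ^ (x/3) ≤ (6:ℝ) ^ x := by
    have h1 : x * (6:ℝ) ^ (x/3) ≤ (6:ℝ) ^ (x/3) * (6:ℝ) ^ (x/3) := by
      have hp : (0:ℝ) < (6:ℝ) ^ (x/3) := by positivity
      nlinarith
    have h2 : (6:ℝ) ^ (x/3) * (6:ℝ) ^ (x/3) = (6:ℝ) ^ (x/3 + x/3) :=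
      (Real.rpow_add (by norm_num) _ _).symm
    have h3 : (6:ℝ) ^ (x/3 + x/3) ≤ (6:ℝ) ^ x :=
      Real.rpow_le_rpow_of_exponent_le (by norm_num) (by linarith)
    linarith [h1, h2 ▸ h1, h3]
  -- b3 : x * 22^(x/6) ≤ 6^x
  have b3 : x * (22:ℝ) ^ (x/6) ≤ (6:ℝ) ^ x := by
    have h1 : x * (22:ℝ) ^ (x/6) ≤ (6:ℝ) ^ (x/3) * (6:ℝ) ^ (x/3) := by
      have hp : (0:ℝ) < (6:ℝ) ^ (x/3) := by positivity
      have hq : (0:ℝ) < (22:ℝ) ^ (x/6) := by positivity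
      nlinarith
    have h2 : (6:ℝ) ^ (x/3) * (6:ℝ) ^ (x/3) = (6:ℝ) ^ (x/3 + x/3) :=
      (Real.rpow_add (by norm_num) _ _).symm
    have h3 : (6:ℝ) ^ (x/3 + x/3) ≤ (6:ℝ) ^ x :=
      Real.rpow_le_rpow_of_exponent_le (by norm_num) (by linarith)
    linarith [h2 ▸ h1, h3]
  -- b4 : x * 22^(x/2) ≤ 8^x
  have b4 : x * (22:ℝ) ^ (x/2) ≤ (8:ℝ) ^ x := by
    have h1 : x * (22:ℝ) ^ (x/2) ≤ (22:ℝ) ^ (x/6) * (22:ℝ) ^ (x/2) := by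
      have hp : (0:ℝ) < (22:ℝ) ^ (x/2) := by positivity
      nlinarith
    have h2 : (22:ℝ) ^ (x/6) * (22:ℝ) ^ (x/2) = (22:ℝ) ^ ((2:ℕ) * (x/3)) := by
      rw [← Real.rpow_add (by norm_num : (0:ℝ) < 22)]
      norm_num; ring_nf
    have h3 : (22:ℝ) ^ ((2:ℕ) * (x/3)) = (484:ℝ) ^ (x/3) :=
      (rpow_base_change 22 484 2 (by norm_num) (by norm_num) (x/3)).symm
    have h4 : (484:ℝ) ^ (x/3) ≤ (512:ℝ) ^ (x/3) :=
      Real.rpow_le_rpow (by norm_num) (by norm_num) (by positivity)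
    have h5 : (512:ℝ) ^ (x/3) = (8:ℝ) ^ ((3:ℕ) * (x/3)) :=
      rpow_base_change 8 512 3 (by norm_num) (by norm_num) (x/3)
    have h6 : (8:ℝ) ^ ((3:ℕ) * (x/3)) = (8:ℝ) ^ x := by
      rw [show ((3:ℕ):ℝ)*(x/3) = x by push_cast; ring]
    calc x * (22:ℝ) ^ (x/2) ≤ (22:ℝ) ^ (x/6) * (22:ℝ) ^ (x/2) := h1
      _ = (484:ℝ) ^ (x/3) := by rw [h2, h3]
      _ ≤ (512:ℝ) ^ (x/3) := h4
      _ = (8:ℝ) ^ x := by rw [h5, h6]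
  -- numeric bounds
  have n1 : (999277715:ℝ) < ((5291:ℝ)/1446) ^ x := by
    have hmono : ((5291:ℝ)/1446) ^ (16:ℝ) ≤ ((5291:ℝ)/1446) ^ x :=
      Real.rpow_le_rpow_of_exponent_le (by norm_num) hx
    have h16 : ((5291:ℝ)/1446) ^ (16:ℝ) = ((5291:ℝ)/1446) ^ (16:ℕ) := by
      rw [← Real.rpow_natCast ((5291:ℝ)/1446) 16]; norm_num
    rw [h16] at hmono
    have : (999277715:ℝ) < ((5291:ℝ)/1446) ^ (16:ℕ) := by
      rw [div_pow, lt_div_iff₀ (by positivity)]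
      norm_num
    linarith
  have n2 : (50:ℝ) ≤ ((5291:ℝ)/1928) ^ x := by
    have hmono : ((5291:ℝ)/1928) ^ (16:ℝ) ≤ ((5291:ℝ)/1928) ^ x :=
      Real.rpow_le_rpow_of_exponent_le (by norm_num) hx
    have h16 : ((5291:ℝ)/1928) ^ (16:ℝ) = ((5291:ℝ)/1928) ^ (16:ℕ) := by
      rw [← Real.rpow_natCast ((5291:ℝ)/1928) 16]; norm_num
    rw [h16] at hmono
    have : (50:ℝ) ≤ ((5291:ℝ)/1928) ^ (16:ℕ) := by
      rw [div_pow, le_div_iff₀ (by positivity)]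
      norm_num
    linarith
  -- splits of c^x
  have s1 : ((5291:ℝ)/241) ^ x = ((5291:ℝ)/1446) ^ x * (6:ℝ) ^ x := by
    rw [← Real.mul_rpow (by norm_num) (by norm_num)]; norm_num
  have s2 : ((5291:ℝ)/241) ^ x = ((5291:ℝ)/1928) ^ x * (8:ℝ) ^ x := by
    rw [← Real.mul_rpow (by norm_num) (by norm_num)]; norm_num
  have h6pos : (0:ℝ) < (6:ℝ) ^ x := by positivity
  have h8pos : (0:ℝ) < (8:ℝ) ^ x := by positivity
  -- main key inequality
  have key : 244823040 * ((6:ℝ)^x + (22:ℝ)^(x/2) + x*(6:ℝ)^(x/3) + x*(22:ℝ)^(x/6))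
      + x * (22:ℝ)^(x/2) < ((5291:ℝ)/241) ^ x := by
    have k1 : (979292160:ℝ) * (6:ℝ)^x < (49/50) * ((5291:ℝ)/241) ^ x := by
      rw [s1]; nlinarith [n1, h6pos]
    have k2 : (8:ℝ)^x ≤ (1/50) * ((5291:ℝ)/241) ^ x := by
      rw [s2]; nlinarith [n2, h8pos]
    linarith [b1, b2, b3, b4, k1, k2]
  -- divide by x
  have hdiv : 244823040 *
        ((1 / x) * (6 : ℝ) ^ x + (1 / x) * (22 : ℝ) ^ (x / 2) +
          (6 : ℝ) ^ (x / 3) + (22 : ℝ) ^ (x / 6))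
      < (1/x) * ((5291:ℝ)/241) ^ x - (22:ℝ)^(x/2) := by
    have h := mul_lt_mul_of_pos_left key (show (0:ℝ) < 1/x by positivity)
    have hexp : (1/x) * (244823040 * ((6:ℝ)^x + (22:ℝ)^(x/2) + x*(6:ℝ)^(x/3) + x*(22:ℝ)^(x/6))
        + x * (22:ℝ)^(x/2))
        = 244823040 * ((1 / x) * (6 : ℝ) ^ x + (1 / x) * (22 : ℝ) ^ (x / 2) +
          (6 : ℝ) ^ (x / 3) + (22 : ℝ) ^ (x / 6)) + (22:ℝ)^(x/2) := by
      field_simp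
    rw [hexp] at h
    linarith
  -- final: drop positive (1/483)^x term
  have hA : (1/x) * ((5291:ℝ)/241) ^ x
      ≤ (1 / x) * (22 : ℝ) ^ x * ((481 / 482 : ℝ) ^ x + (1 / 483 : ℝ) ^ x) := by
    have hm : ((5291:ℝ)/241) ^ x = (22:ℝ)^x * ((481:ℝ)/482) ^ x := by
      rw [← Real.mul_rpow (by norm_num) (by norm_num)]; norm_num
    have hpos : (0:ℝ) ≤ ((1:ℝ)/483) ^ x := by positivity
    have h22pos : (0:ℝ) < (22:ℝ) ^ x := by positivity
    have hterm : (0:ℝ) ≤ (1/x) * (22:ℝ)^x * ((1:ℝ)/483)^x := by positivity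
    have expand : (1/x) * (22:ℝ)^x * (((481:ℝ)/482)^x + ((1:ℝ)/483)^x)
        = (1/x) * ((22:ℝ)^x * ((481:ℝ)/482)^x) + (1/x) * (22:ℝ)^x * ((1:ℝ)/483)^x := by ring
    rw [hm, expand]
    linarith
  linarith
end

section
/- Any formal power series f ∈ ℤ[[x]] with constant term 1 admits a unique expansion f(x) = ∏_{j≥1} (1 + x^{2j−1})^{c_{2j−1}} · (1 − x^{2j})^{−c_{2j}} with integers c_n, where the factors are formal binomial series. -/
/-! Write `L_N`, `R_N` for the two products over `1 ≤ n ≤ N`. The `n`-th factor on either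
side is `1 + (linear coefficient) X^n` modulo `X^(n+1)`, and the linear coefficients on the
right and on the left differ by `c⁺ - (-c)⁺ = c` (for odd `n` and even `n` alike). Since
`L_N` and `R_N` have constant term `1`, passing from `N` to `N + 1` changes `L_N - R_N` by
`-c (N+1) X^(N+1)` modulo `X^(N+2)`. So the congruence at stage `N + 1` holds exactly when
it holds at stage `N` and `c (N+1)` is the `(N+1)`-st coefficient of `L_N - R_N`, a number
determined by `c 1, …, c N`; this recursion both forces and defines the `c n`. -/

open PowerSeries Finset

section Triangular

variable {α : Type*}

noncomputable def triangularSeq (a : α) (F : ℕ → (ℕ → α) → α) : ℕ → α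
  | 0 => a
  | N + 1 => F N fun m => if _h : m ≤ N then triangularSeq a F m else a
decreasing_by omega

theorem existsUnique_of_forall_succ_iff (a : α) {P : ℕ → (ℕ → α) → Prop}
    (F : ℕ → (ℕ → α) → α) (hF : ∀ N c d, (∀ m ≤ N, c m = d m) → F N c = F N d)
    (h0 : ∀ c, P 0 c) (hsucc : ∀ N c, P (N + 1) c ↔ P N c ∧ c (N + 1) = F N c) :
    ∃! c : ℕ → α, c 0 = a ∧ ∀ N, P N c := by
  set s := triangularSeq a F
  have hs0 : s 0 = a := triangularSeq.eq_1 a F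
  have hs (N : ℕ) : s (N + 1) = F N s :=
    (triangularSeq.eq_2 a F N).trans (hF N _ _ fun m hm => dif_pos hm)
  refine ⟨s, ⟨hs0, fun N => ?_⟩, fun c ⟨hc0, hc⟩ => funext fun n => ?_⟩
  · induction N with
    | zero => exact h0 s
    | succ N ih => exact (hsucc N s).2 ⟨ih, hs N⟩
  · induction n using Nat.strong_induction_on with
    | _ n ih =>
      rcases n with _ | N
      · exact hc0.trans hs0.symm
      · rw [((hsucc N c).1 (hc (N + 1))).2, hs N]
        exact hF N c s fun m hm => ih m (by omega)

end Triangular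

namespace PowerSeries

variable {R : Type*} [CommRing R]

theorem trunc_eq_trunc_iff_X_pow_dvd_sub {n : ℕ} {φ ψ : R⟦X⟧} :
    trunc n φ = trunc n ψ ↔ X ^ n ∣ φ - ψ := by
  simp only [X_pow_dvd_iff, map_sub, sub_eq_zero, Polynomial.ext_iff, coeff_trunc]
  refine ⟨fun h m hm => by simpa [hm] using h m, fun h m => ?_⟩
  split_ifs with hm
  exacts [h m hm, rfl]

theorem X_pow_succ_dvd_sub_C_mul_X_pow_iff {n : ℕ} {φ : R⟦X⟧} {a : R} :
    X ^ (n + 1) ∣ φ - C a * X ^ n ↔ X ^ n ∣ φ ∧ coeff n φ = a := by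
  simp only [X_pow_dvd_iff, map_sub, coeff_C_mul_X_pow, Nat.lt_succ_iff_lt_or_eq, or_imp,
    forall_and, forall_eq, if_pos, sub_eq_zero]
  refine and_congr (forall₂_congr fun m hm => ?_) Iff.rfl
  rw [if_neg hm.ne]

theorem X_pow_succ_dvd_one_add_pow_sub {n : ℕ} (hn : 0 < n) (r : R) (m : ℕ) :
    X ^ (n + 1) ∣ (1 + C r * X ^ n) ^ m - (1 + C (m * r) * X ^ n) := by
  have h := sq_dvd_add_pow_sub_sub (C r * X ^ n) 1 m
  rw [one_pow, one_pow, one_mul] at h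
  have hX : X ^ (n + 1) ∣ (C r * X ^ n) ^ 2 :=
    (pow_dvd_pow X (by omega : n + 1 ≤ n * 2)).trans
      (by rw [mul_pow, ← pow_mul]; exact dvd_mul_left _ _)
  exact hX.trans (h.trans (dvd_of_eq (by simp only [map_mul, map_natCast]; ring)))

theorem X_pow_succ_dvd_mul_sub_mul {n : ℕ} {A B u v : R⟦X⟧} {a b : R}
    (hA : constantCoeff A = 1) (hB : constantCoeff B = 1)
    (hu : X ^ (n + 1) ∣ u - (1 + C a * X ^ n)) (hv : X ^ (n + 1) ∣ v - (1 + C b * X ^ n)) :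
    X ^ (n + 1) ∣ (A * u - B * v) - (A - B - C (b - a) * X ^ n) := by
  have hA1 : X ^ (n + 1) ∣ X ^ n * (A - 1) := by
    rw [pow_succ]; exact mul_dvd_mul_left _ (X_dvd_iff.2 (by simp [hA]))
  have hB1 : X ^ (n + 1) ∣ X ^ n * (B - 1) := by
    rw [pow_succ]; exact mul_dvd_mul_left _ (X_dvd_iff.2 (by simp [hB]))
  have := dvd_add (dvd_sub (hu.mul_left A) (hv.mul_left B))
    (dvd_sub (hA1.mul_left (C a)) (hB1.mul_left (C b)))
  convert this using 1
  simp only [map_sub]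
  ring

end PowerSeries

noncomputable def oddEvenFactor (n a b : ℕ) : ℤ⟦X⟧ :=
  if Odd n then (1 + X ^ n) ^ a else (1 - X ^ n) ^ b

theorem X_pow_succ_dvd_oddEvenFactor_sub {n : ℕ} (hn : 0 < n) (a b : ℕ) :
    X ^ (n + 1) ∣ oddEvenFactor n a b - (1 + C (if Odd n then (a : ℤ) else -b) * X ^ n) := by
  unfold oddEvenFactor
  split_ifs
  · simpa using X_pow_succ_dvd_one_add_pow_sub hn (1 : ℤ) a
  · simpa [← sub_eq_add_neg] using X_pow_succ_dvd_one_add_pow_sub hn (-1 : ℤ) b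

theorem constantCoeff_oddEvenFactor {n : ℕ} (hn : n ≠ 0) (a b : ℕ) :
    constantCoeff (oddEvenFactor n a b) = 1 := by
  unfold oddEvenFactor
  split_ifs <;> simp [hn]

noncomputable def lhsProd (f : ℤ⟦X⟧) (c : ℕ → ℤ) (N : ℕ) : ℤ⟦X⟧ :=
  f * ∏ n ∈ Icc 1 N, oddEvenFactor n (-(c n)).toNat (c n).toNat

noncomputable def rhsProd (c : ℕ → ℤ) (N : ℕ) : ℤ⟦X⟧ :=
  ∏ n ∈ Icc 1 N, oddEvenFactor n (c n).toNat (-(c n)).toNat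

theorem constantCoeff_rhsProd (c : ℕ → ℤ) (N : ℕ) : constantCoeff (rhsProd c N) = 1 := by
  rw [rhsProd, map_prod]
  exact prod_eq_one fun n hn => constantCoeff_oddEvenFactor (by grind) _ _

theorem constantCoeff_lhsProd {f : ℤ⟦X⟧} (hf : constantCoeff f = 1) (c : ℕ → ℤ) (N : ℕ) :
    constantCoeff (lhsProd f c N) = 1 := by
  rw [lhsProd, map_mul, hf, one_mul, map_prod]
  exact prod_eq_one fun n hn => constantCoeff_oddEvenFactor (by grind) _ _

theorem lhsProd_congr (f : ℤ⟦X⟧) {c d : ℕ → ℤ} {N : ℕ} (h : ∀ m ≤ N, c m = d m) :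
    lhsProd f c N = lhsProd f d N :=
  congrArg (f * ·) (prod_congr rfl fun n hn => by rw [h n (mem_Icc.1 hn).2])

theorem rhsProd_congr {c d : ℕ → ℤ} {N : ℕ} (h : ∀ m ≤ N, c m = d m) :
    rhsProd c N = rhsProd d N :=
  prod_congr rfl fun n hn => by rw [h n (mem_Icc.1 hn).2]

theorem lhsProd_succ (f : ℤ⟦X⟧) (c : ℕ → ℤ) (N : ℕ) :
    lhsProd f c (N + 1) =
      lhsProd f c N * oddEvenFactor (N + 1) (-(c (N + 1))).toNat (c (N + 1)).toNat := by
  rw [lhsProd, lhsProd, prod_Icc_succ_top (by omega), mul_assoc]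

theorem rhsProd_succ (c : ℕ → ℤ) (N : ℕ) :
    rhsProd c (N + 1) =
      rhsProd c N * oddEvenFactor (N + 1) (c (N + 1)).toNat (-(c (N + 1))).toNat :=
  prod_Icc_succ_top (by omega) _

theorem X_pow_dvd_lhsProd_succ_sub_rhsProd_succ_iff {f : ℤ⟦X⟧} (hf : constantCoeff f = 1)
    (N : ℕ) (c : ℕ → ℤ) :
    X ^ (N + 1 + 1) ∣ lhsProd f c (N + 1) - rhsProd c (N + 1) ↔
      X ^ (N + 1) ∣ lhsProd f c N - rhsProd c N ∧
        c (N + 1) = coeff (N + 1) (lhsProd f c N - rhsProd c N) := by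
  have hpos : 0 < N + 1 := N.succ_pos
  have hstep := X_pow_succ_dvd_mul_sub_mul (constantCoeff_lhsProd hf c N)
    (constantCoeff_rhsProd c N)
    (X_pow_succ_dvd_oddEvenFactor_sub hpos (-c (N + 1)).toNat (c (N + 1)).toNat)
    (X_pow_succ_dvd_oddEvenFactor_sub hpos (c (N + 1)).toNat (-c (N + 1)).toNat)
  have hc : ((if Odd (N + 1) then ((c (N + 1)).toNat : ℤ) else -((-c (N + 1)).toNat : ℤ)) -
      if Odd (N + 1) then ((-c (N + 1)).toNat : ℤ) else -((c (N + 1)).toNat : ℤ)) = c (N + 1) := by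
    split_ifs <;> omega
  rw [hc, ← lhsProd_succ, ← rhsProd_succ] at hstep
  rw [dvd_iff_dvd_of_dvd_sub hstep, X_pow_succ_dvd_sub_C_mul_X_pow_iff, eq_comm]

/-- Any `f ∈ ℤ[[x]]` with constant term 1 admits a unique expansion
`f(x) = ∏_{j≥1} (1 + x^{2j−1})^{c_{2j−1}} (1 − x^{2j})^{−c_{2j}}` with `c_n ∈ ℤ`,
stated via truncations: negatively-exponentiated factors are moved to the other side. -/
theorem stmt_9 (f : PowerSeries ℤ) (hf : PowerSeries.constantCoeff f = 1) :
    ∃! c : ℕ → ℤ, c 0 = 0 ∧ ∀ N : ℕ,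
      PowerSeries.trunc (N + 1)
          (f * ∏ n ∈ Finset.Icc 1 N,
            if Odd n then ((1 : PowerSeries ℤ) + X ^ n) ^ (-(c n)).toNat
            else ((1 : PowerSeries ℤ) - X ^ n) ^ (c n).toNat) =
        PowerSeries.trunc (N + 1)
          (∏ n ∈ Finset.Icc 1 N,
            if Odd n then ((1 : PowerSeries ℤ) + X ^ n) ^ (c n).toNat
            else ((1 : PowerSeries ℤ) - X ^ n) ^ (-(c n)).toNat) := by
  have h0 (c : ℕ → ℤ) : X ^ (0 + 1) ∣ lhsProd f c 0 - rhsProd c 0 := by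
    simp [X_dvd_iff, lhsProd, rhsProd, hf]
  simp only [trunc_eq_trunc_iff_X_pow_dvd_sub]
  exact existsUnique_of_forall_succ_iff 0
    (P := fun N c => X ^ (N + 1) ∣ lhsProd f c N - rhsProd c N)
    (fun N c => coeff (N + 1) (lhsProd f c N - rhsProd c N))
    (fun N c d h => by rw [lhsProd_congr f h, rhsProd_congr h])
    h0 (X_pow_dvd_lhsProd_succ_sub_rhsProd_succ_iff hf)
end

section
/- Lower bound for ρ_m(e): suppose a : ℕ → ℝ satisfies 22^m((481/482)^m + (1/483)^m) < a(m) < 22^m((482/483)^m + (1/482)^m) for all m ≥ 1, and define ρ(m) = (−1)^m (1/m) ∑_{d|m} μ(m/d) (−1)^d a(d). Then for all integers m > 3, ρ(m) > (1/m)·22^m·((481/482)^m + (1/483)^m) − 22^{m/2}. -/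
/-- Lower bound for `ρ_m(e)`: if `a : ℕ → ℝ` satisfies
`22^m((481/482)^m + (1/483)^m) < a(m) < 22^m((482/483)^m + (1/482)^m)` for `m ≥ 1`, then
for `m > 3`,
`(−1)^m (1/m) ∑_{d|m} μ(m/d)(−1)^d a(d) > (1/m)·22^m((481/482)^m + (1/483)^m) − 22^{m/2}`. -/
theorem stmt_15 (a : ℕ → ℝ)
    (ha : ∀ m : ℕ, 1 ≤ m →
      (22 : ℝ) ^ m * ((481 / 482 : ℝ) ^ m + (1 / 483 : ℝ) ^ m) < a m ∧
        a m < (22 : ℝ) ^ m * ((482 / 483 : ℝ) ^ m + (1 / 482 : ℝ) ^ m)) :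
    ∀ m : ℕ, 3 < m →
      (-1 : ℝ) ^ m * (1 / m) *
          (∑ d ∈ m.divisors, (ArithmeticFunction.moebius (m / d) : ℝ) * (-1 : ℝ) ^ d * a d) >
        (1 / m) * (22 : ℝ) ^ m * ((481 / 482 : ℝ) ^ m + (1 / 483 : ℝ) ^ m) -
          (22 : ℝ) ^ ((m : ℝ) / 2) := by
  intro m hm
  have hm0 : 0 < m := by omega
  have hmR : (0:ℝ) < m := by exact_mod_cast hm0
  set k := m / 2 with hk
  set R : ℝ := (22 : ℝ) ^ ((m : ℝ) / 2) with hR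
  have hRpos : 0 < R := Real.rpow_pos_of_pos (by norm_num) _
  -- bound on |a d|
  have habs : ∀ d : ℕ, 1 ≤ d → |a d| ≤ 2 * 22 ^ d := by
    intro d hd
    obtain ⟨h1, h2⟩ := ha d hd
    have hpow : (0:ℝ) < 22 ^ d := by positivity
    have hpos : 0 < a d := lt_trans (by positivity) h1
    rw [abs_of_pos hpos]
    have h3 : (482/483 : ℝ) ^ d ≤ 1 := pow_le_one₀ (by norm_num) (by norm_num)
    have h4 : (1/482 : ℝ) ^ d ≤ 1 := pow_le_one₀ (by norm_num) (by norm_num)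
    nlinarith
  set f : ℕ → ℝ := fun d => (ArithmeticFunction.moebius (m / d) : ℝ) * (-1 : ℝ) ^ d * a d
    with hf
  set T : ℝ := ∑ d ∈ m.divisors.erase m, f d with hT
  -- the erased set lives in Icc 1 k
  have hsub : m.divisors.erase m ⊆ Finset.Icc 1 k := by
    intro d hd
    have hdne := Finset.ne_of_mem_erase hd
    have hdm := Finset.mem_of_mem_erase hd
    rw [Nat.mem_divisors] at hdm
    obtain ⟨⟨c, hc⟩, _⟩ := hdm
    have hd0 : 0 < d := Nat.pos_of_mem_divisors (Finset.mem_of_mem_erase hd)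
    have hc2 : 2 ≤ c := by
      rcases Nat.lt_or_ge c 2 with h | h
      · interval_cases c <;> omega
      · exact h
    have : d * 2 ≤ m := by nlinarith
    rw [Finset.mem_Icc]
    omega
  -- bound |T|
  have hTbound : |T| ≤ (m : ℝ) * R := by
    have step1 : |T| ≤ ∑ d ∈ m.divisors.erase m, |f d| := Finset.abs_sum_le_sum_abs _ _
    have step2 : ∑ d ∈ m.divisors.erase m, |f d| ≤ ∑ d ∈ m.divisors.erase m, 2 * 22 ^ d := by
      apply Finset.sum_le_sum
      intro d hd
      have hd1 : 1 ≤ d := Nat.pos_of_mem_divisors (Finset.mem_of_mem_erase hd)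
      have hmu : |(ArithmeticFunction.moebius (m / d) : ℝ)| ≤ 1 := by
        have := ArithmeticFunction.abs_moebius_le_one (n := m / d)
        exact_mod_cast this
      have hsign : |(-1 : ℝ) ^ d| = 1 := by
        rw [abs_pow, abs_neg, abs_one, one_pow]
      rw [hf]
      simp only [abs_mul, hsign, mul_one]
      calc |(ArithmeticFunction.moebius (m / d) : ℝ)| * |a d|
          ≤ 1 * (2 * 22 ^ d) := by
            apply mul_le_mul hmu (habs d hd1) (abs_nonneg _) (by norm_num)
        _ = 2 * 22 ^ d := by ring
    have step3 : ∑ d ∈ m.divisors.erase m, 2 * (22:ℝ) ^ d ≤ ∑ d ∈ Finset.Icc 1 k, 2 * (22:ℝ) ^ d :=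
      Finset.sum_le_sum_of_subset_of_nonneg hsub (fun i _ _ => by positivity)
    have step4 : ∑ d ∈ Finset.Icc 1 k, (22:ℝ) ^ d ≤ 22 ^ (k + 1) / 21 := by
      have hsubset : Finset.Icc 1 k ⊆ Finset.range (k + 1) := by
        intro i hi
        rw [Finset.mem_Icc] at hi
        rw [Finset.mem_range]
        omega
      have h1 : ∑ d ∈ Finset.Icc 1 k, (22:ℝ) ^ d ≤ ∑ d ∈ Finset.range (k + 1), (22:ℝ) ^ d :=
        Finset.sum_le_sum_of_subset_of_nonneg hsubset (fun i _ _ => by positivity)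
      have h2 : ∑ d ∈ Finset.range (k + 1), (22:ℝ) ^ d = (22 ^ (k + 1) - 1) / (22 - 1) :=
        geom_sum_eq (by norm_num) _
      rw [h2] at h1
      have : (0:ℝ) < 22 ^ (k+1) := by positivity
      linarith [h1]
    have hkR : (22:ℝ) ^ k ≤ R := by
      have hcast : ((22:ℝ)) ^ k = (22:ℝ) ^ ((k:ℝ)) := (Real.rpow_natCast 22 k).symm
      rw [hcast, hR]
      apply Real.rpow_le_rpow_of_exponent_le (by norm_num)
      have : 2 * k ≤ m := by omega
      have : (2:ℝ) * (k:ℝ) ≤ (m:ℝ) := by exact_mod_cast this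
      linarith
    have hm4 : (4:ℝ) ≤ (m:ℝ) := by exact_mod_cast (by omega : 4 ≤ m)
    have hkpos : (0:ℝ) < 22 ^ k := by positivity
    calc |T| ≤ ∑ d ∈ Finset.Icc 1 k, 2 * (22:ℝ) ^ d := le_trans step1 (le_trans step2 step3)
      _ = 2 * ∑ d ∈ Finset.Icc 1 k, (22:ℝ) ^ d := by rw [Finset.mul_sum]
      _ ≤ 2 * (22 ^ (k + 1) / 21) := by linarith
      _ = (44 / 21) * 22 ^ k := by ring
      _ ≤ 4 * 22 ^ k := by linarith
      _ ≤ 4 * R := by linarith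
      _ ≤ (m : ℝ) * R := by nlinarith
  -- split off the d = m term
  have hmem : m ∈ m.divisors := Nat.mem_divisors_self m hm0.ne'
  have hsplit : ∑ d ∈ m.divisors, f d = f m + T := by
    rw [hT]
    exact (Finset.add_sum_erase _ f hmem).symm
  have hfm : f m = (-1 : ℝ) ^ m * a m := by
    rw [hf]
    simp [Nat.div_self hm0]
  set e : ℝ := (-1 : ℝ) ^ m with he
  have hee : e * e = 1 := by
    rw [he, ← pow_add]
    simp [← two_mul, pow_mul]
  have heabs : |e| = 1 := by rw [he, abs_pow, abs_neg, abs_one, one_pow]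
  have hexp : e * (1 / (m:ℝ)) * (e * a m + T) = (1 / (m:ℝ)) * a m + e * (1 / (m:ℝ)) * T := by
    have : e * (1 / (m:ℝ)) * (e * a m + T)
        = (e * e) * ((1 / (m:ℝ)) * a m) + e * (1 / (m:ℝ)) * T := by ring
    rw [this, hee, one_mul]
  have haM := (ha m (by omega)).1
  have heT : e * T ≥ -((m:ℝ) * R) := by
    have h1 : |e * T| = |T| := by rw [abs_mul, heabs, one_mul]
    have h2 := neg_abs_le (e * T)
    rw [h1] at h2
    linarith
  have hinvpos : (0:ℝ) < 1 / (m:ℝ) := by positivity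
  have key : (1 / (m:ℝ)) * (e * T) ≥ -R := by
    have h1 : (1 / (m:ℝ)) * (-((m:ℝ) * R)) ≤ (1 / (m:ℝ)) * (e * T) :=
      mul_le_mul_of_nonneg_left heT (le_of_lt hinvpos)
    have h2 : (1 / (m:ℝ)) * (-((m:ℝ) * R)) = -R := by
      field_simp
    linarith
  have hB : (1 / (m:ℝ)) * a m > (1 / (m:ℝ)) * ((22 : ℝ) ^ m * ((481 / 482 : ℝ) ^ m + (1 / 483 : ℝ) ^ m)) :=
    mul_lt_mul_of_pos_left haM hinvpos
  have heq2 : (1 / (m:ℝ)) * ((22 : ℝ) ^ m * ((481 / 482 : ℝ) ^ m + (1 / 483 : ℝ) ^ m))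
      = (1 / (m:ℝ)) * (22 : ℝ) ^ m * ((481 / 482 : ℝ) ^ m + (1 / 483 : ℝ) ^ m) := by ring
  calc e * (1 / (m:ℝ)) * (∑ d ∈ m.divisors, f d)
      = (1 / (m:ℝ)) * a m + e * (1 / (m:ℝ)) * T := by rw [hsplit, hfm, hexp]
    _ > (1 / (m:ℝ)) * (22 : ℝ) ^ m * ((481 / 482 : ℝ) ^ m + (1 / 483 : ℝ) ^ m) - R := by
        have h3 : e * (1 / (m:ℝ)) * T = (1 / (m:ℝ)) * (e * T) := by ring
        rw [h3]
        linarith [key, hB, heq2]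
end

section
/- For every positive integer m, 2 + (1/m)·4^{m/2} + (1/m)·6^{m/3} + (1/m)·22^{m/6} + 4^{m/10} + 6^{m/15} + 22^{m/30} < (1/m)·6^m + (1/m)·22^{m/2} + 6^{m/3} + 22^{m/6}. -/
lemma keyle (a b x k : ℝ) (ha : 0 ≤ a) (hb : 0 ≤ b) (hx : 0 ≤ x) (hk : 0 < k)
    (h : b ≤ a ^ k) : b ^ (x / k) ≤ a ^ x := by
  have hxk : 0 ≤ x / k := div_nonneg hx hk.le
  calc b ^ (x / k) ≤ (a ^ k) ^ (x / k) := Real.rpow_le_rpow hb h hxk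
    _ = a ^ (k * (x / k)) := (Real.rpow_mul ha _ _).symm
    _ = a ^ x := by rw [mul_div_cancel₀ _ hk.ne']

lemma keylt (a b x k : ℝ) (ha : 0 ≤ a) (hx : 0 < x) (hk : 0 < k)
    (h : a ^ k < b) : a ^ x < b ^ (x / k) := by
  have hxk : 0 < x / k := div_pos hx hk
  calc a ^ x = a ^ (k * (x / k)) := by rw [mul_div_cancel₀ _ hk.ne']
    _ = (a ^ k) ^ (x / k) := Real.rpow_mul ha _ _
    _ < b ^ (x / k) := Real.rpow_lt_rpow (Real.rpow_nonneg ha k) h hxk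

lemma aux_nat (n : ℕ) (h : 3 ≤ n) : 7 * n < 3 ^ n := by
  induction n with
  | zero => omega
  | succ k ih =>
    rcases Nat.lt_or_ge k 3 with hk | hk
    · interval_cases k <;> first | omega | norm_num
    · have h1 := ih (by omega)
      have h2 : 3 ^ 3 ≤ 3 ^ k := Nat.pow_le_pow_right (by norm_num) hk
      rw [pow_succ]
      norm_num at h2 ⊢
      nlinarith

/-- For every positive integer `m`,
`2 + (1/m)4^{m/2} + (1/m)6^{m/3} + (1/m)22^{m/6} + 4^{m/10} + 6^{m/15} + 22^{m/30}
  < (1/m)6^m + (1/m)22^{m/2} + 6^{m/3} + 22^{m/6}`. -/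
theorem stmt_17 (m : ℕ) (hm : 0 < m) :
    2 + (1 / (m : ℝ)) * (4 : ℝ) ^ ((m : ℝ) / 2) + (1 / (m : ℝ)) * (6 : ℝ) ^ ((m : ℝ) / 3) +
        (1 / (m : ℝ)) * (22 : ℝ) ^ ((m : ℝ) / 6) + (4 : ℝ) ^ ((m : ℝ) / 10) +
        (6 : ℝ) ^ ((m : ℝ) / 15) + (22 : ℝ) ^ ((m : ℝ) / 30) <
      (1 / (m : ℝ)) * (6 : ℝ) ^ (m : ℝ) + (1 / (m : ℝ)) * (22 : ℝ) ^ ((m : ℝ) / 2) +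
        (6 : ℝ) ^ ((m : ℝ) / 3) + (22 : ℝ) ^ ((m : ℝ) / 6) := by
  have hm1 : (1:ℝ) ≤ (m:ℝ) := by exact_mod_cast hm
  have hmpos : (0:ℝ) < (m:ℝ) := by linarith
  have hm0 : (0:ℝ) ≤ (m:ℝ) := hmpos.le
  have hinv1 : 1 / (m:ℝ) ≤ 1 := by rw [div_le_one hmpos]; exact hm1
  -- each small term is ≤ 2 ^ m
  have b1 : (4:ℝ) ^ ((m:ℝ)/2) ≤ (2:ℝ) ^ (m:ℝ) :=
    keyle 2 4 m 2 (by norm_num) (by norm_num) hm0 (by norm_num) (by norm_num)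
  have b2 : (6:ℝ) ^ ((m:ℝ)/3) ≤ (2:ℝ) ^ (m:ℝ) :=
    keyle 2 6 m 3 (by norm_num) (by norm_num) hm0 (by norm_num) (by norm_num)
  have b3 : (22:ℝ) ^ ((m:ℝ)/6) ≤ (2:ℝ) ^ (m:ℝ) :=
    keyle 2 22 m 6 (by norm_num) (by norm_num) hm0 (by norm_num) (by norm_num)
  have b4 : (4:ℝ) ^ ((m:ℝ)/10) ≤ (2:ℝ) ^ (m:ℝ) :=
    keyle 2 4 m 10 (by norm_num) (by norm_num) hm0 (by norm_num) (by norm_num)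
  have b5 : (6:ℝ) ^ ((m:ℝ)/15) ≤ (2:ℝ) ^ (m:ℝ) :=
    keyle 2 6 m 15 (by norm_num) (by norm_num) hm0 (by norm_num) (by norm_num)
  have b6 : (22:ℝ) ^ ((m:ℝ)/30) ≤ (2:ℝ) ^ (m:ℝ) :=
    keyle 2 22 m 30 (by norm_num) (by norm_num) hm0 (by norm_num) (by norm_num)
  have e0 : (2:ℝ) ≤ (2:ℝ) ^ (m:ℝ) := by
    have := Real.rpow_le_rpow_of_exponent_le (by norm_num : (1:ℝ) ≤ 2) hm1
    rwa [Real.rpow_one] at this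
  have e1 : (1/(m:ℝ)) * (4:ℝ) ^ ((m:ℝ)/2) ≤ (2:ℝ) ^ (m:ℝ) :=
    le_trans (mul_le_of_le_one_left (Real.rpow_nonneg (by norm_num) _) hinv1) b1
  have e2 : (1/(m:ℝ)) * (6:ℝ) ^ ((m:ℝ)/3) ≤ (2:ℝ) ^ (m:ℝ) :=
    le_trans (mul_le_of_le_one_left (Real.rpow_nonneg (by norm_num) _) hinv1) b2
  have e3 : (1/(m:ℝ)) * (22:ℝ) ^ ((m:ℝ)/6) ≤ (2:ℝ) ^ (m:ℝ) :=
    le_trans (mul_le_of_le_one_left (Real.rpow_nonneg (by norm_num) _) hinv1) b3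
  have hL : 2 + (1 / (m : ℝ)) * (4 : ℝ) ^ ((m : ℝ) / 2) + (1 / (m : ℝ)) * (6 : ℝ) ^ ((m : ℝ) / 3) +
        (1 / (m : ℝ)) * (22 : ℝ) ^ ((m : ℝ) / 6) + (4 : ℝ) ^ ((m : ℝ) / 10) +
        (6 : ℝ) ^ ((m : ℝ) / 15) + (22 : ℝ) ^ ((m : ℝ) / 30) ≤ 7 * (2:ℝ) ^ (m:ℝ) := by
    linarith
  rcases Nat.lt_or_ge m 3 with h3 | h3
  · -- m = 1 or m = 2
    interval_cases m
    · -- m = 1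
      have L1 : (4.6:ℝ) ^ ((1:ℝ)) < (22:ℝ) ^ ((1:ℝ)/2) :=
        keylt 4.6 22 1 2 (by norm_num) (by norm_num) (by norm_num) (by norm_num)
      rw [Real.rpow_one] at L1
      have eqP : (2:ℝ) ^ (1:ℝ) = 2 := Real.rpow_one 2
      have eq6 : (6:ℝ) ^ (1:ℝ) = 6 := Real.rpow_one 6
      push_cast at hL ⊢
      linarith [L1, eqP, eq6, hL]
    · -- m = 2
      have eqP : (2:ℝ) ^ ((2:ℕ):ℝ) = 4 := by push_cast; norm_num
      have eq6 : (6:ℝ) ^ ((2:ℕ):ℝ) = 36 := by push_cast; norm_num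
      have eq22' : (22:ℝ) ^ (((2:ℕ):ℝ)/2) = 22 := by
        rw [show (((2:ℕ):ℝ)/2) = 1 by push_cast; norm_num, Real.rpow_one]
      have r2 : (0:ℝ) ≤ (6:ℝ) ^ (((2:ℕ):ℝ)/3) := Real.rpow_nonneg (by norm_num) _
      have r3 : (0:ℝ) ≤ (22:ℝ) ^ (((2:ℕ):ℝ)/6) := Real.rpow_nonneg (by norm_num) _
      push_cast at hL eqP eq6 eq22' r2 r3 ⊢
      linarith
  · -- m ≥ 3
    have hnat : 7 * m < 3 ^ m := aux_nat m h3
    have hcast : (7:ℝ) * m < 3 ^ m := by exact_mod_cast hnat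
    have h2pos : (0:ℝ) < 2 ^ m := by positivity
    have key3 : (7:ℝ) * 2 ^ m * m < 6 ^ m := by
      calc (7:ℝ) * 2 ^ m * m = (7 * m) * 2 ^ m := by ring
        _ < 3 ^ m * 2 ^ m := mul_lt_mul_of_pos_right hcast h2pos
        _ = 6 ^ m := by rw [← mul_pow]; norm_num
    have h7 : 7 * (2:ℝ) ^ (m:ℝ) < (1/(m:ℝ)) * (6:ℝ) ^ (m:ℝ) := by
      rw [Real.rpow_natCast, Real.rpow_natCast, one_div, inv_mul_eq_div,
        lt_div_iff₀ hmpos]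
      exact key3
    have r1 : (0:ℝ) ≤ (1/(m:ℝ)) * (22:ℝ) ^ ((m:ℝ)/2) := by positivity
    have r2 : (0:ℝ) ≤ (6:ℝ) ^ ((m:ℝ)/3) := Real.rpow_nonneg (by norm_num) _
    have r3 : (0:ℝ) ≤ (22:ℝ) ^ ((m:ℝ)/6) := Real.rpow_nonneg (by norm_num) _
    linarith
end
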